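/- arXiv:2006.13099 — 3 statements merged into one kernel-verified Lean document; each statement's English description precedes it below -/
import Mathlib

section
/- Let p, q > 1 be conjugate exponents. For any x in the nonnegative orthant of R^d minus the origin, (sum_{k,l} |∂²M_p(x)/∂x_k ∂x_l|^q)^{1/q} <= (p-1)/M_p(x), where the sum runs over pairs (k,l) with k ≠ l and the mixed partial equals -(p-1) x_k^{p-1} x_l^{p-1} / M_p(x)^{2p-1}. -/
open Real Finset

/-- The `ℓ_q`-norm of the off-diagonal second partial derivatives of
`M_p(x) = (∑ x_j^p)^(1/p)` is at most `(p-1)/M_p(x)`, where the mixed partial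
for `k ≠ l` is `-(p-1) x_k^(p-1) x_l^(p-1) / M_p(x)^(2p-1)`. -/
theorem lp_second_mixed_partials_norm (d : ℕ) (p q : ℝ) (hp : 1 < p) (hq : 1 < q)
    (hpq : 1 / p + 1 / q = 1) (x : Fin d → ℝ) (hx : ∀ i, 0 ≤ x i) (hx0 : x ≠ 0) :
    (∑ k : Fin d, ∑ l : Fin d,
        if k ≠ l then
          |-((p - 1) * (x k) ^ (p - 1) * (x l) ^ (p - 1)
              / ((∑ j, (x j) ^ p) ^ (1 / p)) ^ (2 * p - 1))| ^ q
        else 0) ^ (1 / q)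
      ≤ (p - 1) / (∑ j, (x j) ^ p) ^ (1 / p) := by
  have hp1 : (0:ℝ) ≤ p - 1 := by linarith
  have hq0 : (0:ℝ) < q := by linarith
  have hpne : p ≠ 0 := by positivity
  have hqne : q ≠ 0 := by positivity
  have hpq' : (p - 1) * q = p := by
    field_simp at hpq
    nlinarith
  set S := ∑ j, (x j) ^ p with hS
  have hSpos : 0 < S := by
    obtain ⟨i, hi⟩ : ∃ i, x i ≠ 0 := by
      by_contra h; push_neg at h; exact hx0 (funext h)
    have hxi : 0 < x i := lt_of_le_of_ne (hx i) (Ne.symm hi)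
    exact Finset.sum_pos' (fun j _ => Real.rpow_nonneg (hx j) p)
      ⟨i, Finset.mem_univ i, Real.rpow_pos_of_pos hxi p⟩
  have hM : 0 < S ^ (1/p) := Real.rpow_pos_of_pos hSpos _
  have hC : 0 < (S ^ (1/p)) ^ (2*p - 1) := Real.rpow_pos_of_pos hM _
  have hterm : ∀ k l : Fin d, k ≠ l →
      |-((p - 1) * (x k) ^ (p - 1) * (x l) ^ (p - 1) / (S ^ (1/p)) ^ (2*p - 1))| ^ q
        = (p-1)^q * ((x k)^p * (x l)^p) / ((S ^ (1/p)) ^ (2*p - 1)) ^ q := by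
    intro k l _
    have hnn : 0 ≤ (p - 1) * (x k) ^ (p - 1) :=
      mul_nonneg hp1 (Real.rpow_nonneg (hx k) _)
    have hnn2 : 0 ≤ (p - 1) * (x k) ^ (p - 1) * (x l) ^ (p - 1) :=
      mul_nonneg hnn (Real.rpow_nonneg (hx l) _)
    rw [abs_neg, abs_of_nonneg (div_nonneg hnn2 hC.le)]
    rw [Real.div_rpow hnn2 hC.le,
      Real.mul_rpow hnn (Real.rpow_nonneg (hx l) _),
      Real.mul_rpow hp1 (Real.rpow_nonneg (hx k) _),
      ← Real.rpow_mul (hx k), ← Real.rpow_mul (hx l), hpq']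
    ring
  have key : (p-1)^q * (S * S) / ((S ^ (1/p)) ^ (2*p - 1)) ^ q
      = ((p - 1) / S ^ (1/p)) ^ q := by
    have hpow : S * S * S ^ (1/p * q) = S ^ (1/p * (2*p-1) * q) := by
      have h1 : (1:ℝ)/p * (2*p-1) * q = 1 + (1 + 1/p*q) := by
        field_simp
        nlinarith [hpq']
      rw [h1, Real.rpow_add hSpos, Real.rpow_add hSpos, Real.rpow_one]
      ring
    rw [Real.div_rpow hp1 hM.le, ← Real.rpow_mul hSpos.le,
      ← Real.rpow_mul hSpos.le, ← Real.rpow_mul hSpos.le,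
      div_eq_div_iff (by positivity) (by positivity), mul_assoc, hpow]
  have hsum : (∑ k : Fin d, ∑ l : Fin d,
        if k ≠ l then
          |-((p - 1) * (x k) ^ (p - 1) * (x l) ^ (p - 1)
              / (S ^ (1/p)) ^ (2*p - 1))| ^ q
        else 0) ≤ ((p - 1) / S ^ (1/p)) ^ q := by
    rw [← key]
    have step : ∀ k l : Fin d,
        (if k ≠ l then
          |-((p - 1) * (x k) ^ (p - 1) * (x l) ^ (p - 1)
              / (S ^ (1/p)) ^ (2*p - 1))| ^ q else 0)
        ≤ ((x k)^p * (x l)^p) * ((p-1)^q / ((S ^ (1/p)) ^ (2*p - 1)) ^ q) := by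
      intro k l
      split_ifs with h
      · rw [hterm k l h]; apply le_of_eq; ring
      · exact mul_nonneg (mul_nonneg (Real.rpow_nonneg (hx k) _) (Real.rpow_nonneg (hx l) _))
          (div_nonneg (Real.rpow_nonneg hp1 _) (by positivity))
    calc (∑ k : Fin d, ∑ l : Fin d,
          if k ≠ l then
            |-((p - 1) * (x k) ^ (p - 1) * (x l) ^ (p - 1)
                / (S ^ (1/p)) ^ (2*p - 1))| ^ q else 0)
        ≤ ∑ k : Fin d, ∑ l : Fin d,
            ((x k)^p * (x l)^p) * ((p-1)^q / ((S ^ (1/p)) ^ (2*p - 1)) ^ q) :=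
          Finset.sum_le_sum (fun k _ => Finset.sum_le_sum (fun l _ => step k l))
      _ = (p-1)^q * (S * S) / ((S ^ (1/p)) ^ (2*p - 1)) ^ q := by
          simp_rw [← Finset.sum_mul, ← Finset.sum_mul_sum]
          ring
  calc (∑ k : Fin d, ∑ l : Fin d,
        if k ≠ l then
          |-((p - 1) * (x k) ^ (p - 1) * (x l) ^ (p - 1)
              / (S ^ (1/p)) ^ (2*p - 1))| ^ q
        else 0) ^ (1 / q)
      ≤ (((p - 1) / S ^ (1/p)) ^ q) ^ (1/q) := by
        apply Real.rpow_le_rpow ?_ hsum (by positivity)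
        apply Finset.sum_nonneg; intro k _
        apply Finset.sum_nonneg; intro l _
        split_ifs <;> positivity
    _ = (p - 1) / S ^ (1/p) := by
        rw [show (1:ℝ)/q = q⁻¹ from one_div q,
          Real.rpow_rpow_inv (div_nonneg hp1 hM.le) hqne]
end

section
/- Let p >= 2 and q = p/(p-1). For any x in the nonnegative orthant of R^d minus the origin, (sum_{k=1}^d |∂²M_p(x)/∂x_k²|^q)^{1/q} <= 2(p-1)d^{1/p}/M_p(x) + 2(p-1)/M_p(x). -/
/-!
Write `M = M_p(x)` and `t_k = x_k / M`, so that `∑ t_k^p = 1`. The `k`-th second partial is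
`(p-1)/M · t_k^(p-2) (1 - t_k^p)`, which lies between `0` and `(p-1)/M · t_k^(p-2)`. Since
`(p-2)q ≤ p`, the power-mean inequality bounds `‖t^(p-2)‖_q` by `d^(1/q - (p-2)/p) = d^(1/p)`,
so the left-hand side is even at most `(p-1) d^(1/p) / M`.
-/

open Real Finset

section FiniteSums

variable {ι : Type*} (s : Finset ι) {f g y : ι → ℝ}

theorem sum_rpow_le_card_rpow_mul_sum_rpow_rpow {r p : ℝ} (hr : 0 ≤ r) (hrp : r ≤ p)
    (hy : ∀ i ∈ s, 0 ≤ y i) :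
    ∑ i ∈ s, y i ^ r ≤ (#s : ℝ) ^ (1 - r / p) * (∑ i ∈ s, y i ^ p) ^ (r / p) := by
  rcases hr.eq_or_lt with rfl | hr
  · simp
  have hp : 0 < p := hr.trans_le hrp
  have hyr : ∀ i ∈ s, 0 ≤ y i ^ r := fun i hi => rpow_nonneg (hy i hi) r
  have power_mean := rpow_sum_le_const_mul_sum_rpow_of_nonneg s
    ((one_le_div hr).mpr hrp) hyr
  have hpow : ∀ i ∈ s, (y i ^ r) ^ (p / r) = y i ^ p := fun i hi => by
    rw [← rpow_mul (hy i hi), mul_div_cancel₀ p hr.ne']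
  rw [sum_congr rfl hpow] at power_mean
  calc ∑ i ∈ s, y i ^ r = ((∑ i ∈ s, y i ^ r) ^ (p / r)) ^ (r / p) := by
        rw [← rpow_mul (sum_nonneg hyr), show p / r * (r / p) = 1 by field_simp, rpow_one]
    _ ≤ ((#s : ℝ) ^ (p / r - 1) * ∑ i ∈ s, y i ^ p) ^ (r / p) :=
        rpow_le_rpow (rpow_nonneg (sum_nonneg hyr) _) power_mean (div_pos hr hp).le
    _ = (#s : ℝ) ^ (1 - r / p) * (∑ i ∈ s, y i ^ p) ^ (r / p) := by
        rw [mul_rpow (by positivity) (sum_nonneg fun i hi => rpow_nonneg (hy i hi) p),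
          ← rpow_mul (Nat.cast_nonneg _)]
        congr 2
        field_simp

theorem sum_rpow_rpow_inv_le {a p q : ℝ} (ha : 0 ≤ a) (hq : 0 < q) (haq : a * q ≤ p)
    (hy : ∀ i ∈ s, 0 ≤ y i) :
    (∑ i ∈ s, (y i ^ a) ^ q) ^ (1 / q)
      ≤ (#s : ℝ) ^ (1 / q - a / p) * (∑ i ∈ s, y i ^ p) ^ (a / p) := by
  have hT : 0 ≤ ∑ i ∈ s, y i ^ p := sum_nonneg fun i hi => rpow_nonneg (hy i hi) p
  have hyaq : ∀ i ∈ s, (y i ^ a) ^ q = y i ^ (a * q) := fun i hi =>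
    (rpow_mul (hy i hi) a q).symm
  calc (∑ i ∈ s, (y i ^ a) ^ q) ^ (1 / q) = (∑ i ∈ s, y i ^ (a * q)) ^ (1 / q) := by
        rw [sum_congr rfl hyaq]
    _ ≤ ((#s : ℝ) ^ (1 - a * q / p) * (∑ i ∈ s, y i ^ p) ^ (a * q / p)) ^ (1 / q) := by
        gcongr
        · exact sum_nonneg fun i hi => rpow_nonneg (hy i hi) _
        · exact sum_rpow_le_card_rpow_mul_sum_rpow_rpow s (mul_nonneg ha hq.le) haq hy
    _ = (#s : ℝ) ^ (1 / q - a / p) * (∑ i ∈ s, y i ^ p) ^ (a / p) := by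
        rw [mul_rpow (by positivity) (rpow_nonneg hT _), ← rpow_mul (Nat.cast_nonneg _),
          ← rpow_mul hT]
        congr 2 <;> field_simp

theorem sum_abs_rpow_rpow_inv_le_mul {q c : ℝ} (hq : 0 < q) (hc : 0 ≤ c)
    (hg : ∀ i ∈ s, 0 ≤ g i) (hfg : ∀ i ∈ s, |f i| ≤ c * g i) :
    (∑ i ∈ s, |f i| ^ q) ^ (1 / q) ≤ c * (∑ i ∈ s, g i ^ q) ^ (1 / q) := by
  have hgq : 0 ≤ ∑ i ∈ s, g i ^ q := sum_nonneg fun i hi => rpow_nonneg (hg i hi) q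
  calc (∑ i ∈ s, |f i| ^ q) ^ (1 / q) ≤ (∑ i ∈ s, (c * g i) ^ q) ^ (1 / q) := by
        gcongr with i hi
        exact hfg i hi
    _ = c * (∑ i ∈ s, g i ^ q) ^ (1 / q) := by
        rw [sum_congr rfl fun i hi => mul_rpow hc (hg i hi), ← mul_sum,
          mul_rpow (by positivity) hgq, ← rpow_mul hc, mul_one_div_cancel hq.ne', rpow_one]

theorem le_sum_rpow_rpow_inv {p : ℝ} (hp : 0 < p) (hy : ∀ i ∈ s, 0 ≤ y i) {i : ι}
    (hi : i ∈ s) :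
    y i ≤ (∑ j ∈ s, y j ^ p) ^ (1 / p) := by
  have hyp : ∀ j ∈ s, 0 ≤ y j ^ p := fun j hj => rpow_nonneg (hy j hj) p
  rw [one_div, le_rpow_inv_iff_of_pos (hy i hi) (sum_nonneg hyp) hp]
  exact single_le_sum hyp hi

theorem sum_rpow_sub_two_rpow_conj_le {p : ℝ} (hp : 2 ≤ p) (hy : ∀ i ∈ s, 0 ≤ y i) :
    (∑ i ∈ s, (y i ^ (p - 2)) ^ (p / (p - 1))) ^ (1 / (p / (p - 1)))
      ≤ (#s : ℝ) ^ (1 / p) * ((∑ i ∈ s, y i ^ p) ^ (1 / p)) ^ (p - 2) := by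
  have hp1 : 0 < p - 1 := by linarith
  have hexp : 1 / (p / (p - 1)) - (p - 2) / p = 1 / p := by field_simp; ring
  have hT : 0 ≤ ∑ i ∈ s, y i ^ p := sum_nonneg fun i hi => rpow_nonneg (hy i hi) p
  rw [← rpow_mul hT, one_div_mul_eq_div, ← hexp]
  refine sum_rpow_rpow_inv_le s (by linarith) (div_pos (by linarith) hp1) ?_ hy
  rw [← mul_div_assoc, div_le_iff₀ hp1]
  nlinarith

end FiniteSums

theorem abs_lp_second_partial_le {p t M : ℝ} (hp : 1 < p) (ht : 0 ≤ t) (htM : t ≤ M) :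
    |(p - 1) * t ^ (p - 2) / M ^ (p - 1) - (p - 1) * t ^ (2 * p - 2) / M ^ (2 * p - 1)|
      ≤ (p - 1) / M ^ (p - 1) * t ^ (p - 2) := by
  have hM : 0 ≤ M := ht.trans htM
  set A := (p - 1) / M ^ (p - 1) * t ^ (p - 2)
  have hA : 0 ≤ A := by positivity
  have hratio : 0 ≤ t ^ p / M ^ p ∧ t ^ p / M ^ p ≤ 1 :=
    ⟨by positivity, div_le_one_of_le₀ (rpow_le_rpow ht htM (by linarith)) (by positivity)⟩
  have hfactor : (p - 1) * t ^ (p - 2) / M ^ (p - 1) - (p - 1) * t ^ (2 * p - 2) / M ^ (2 * p - 1)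
      = A * (1 - t ^ p / M ^ p) := by
    rw [show 2 * p - 2 = (p - 2) + p by ring, show 2 * p - 1 = (p - 1) + p by ring,
      rpow_add' ht (by linarith), rpow_add' hM (by linarith)]
    ring
  rw [hfactor, abs_of_nonneg (mul_nonneg hA (by linarith))]
  nlinarith

/-- For `p ≥ 2` and `q = p/(p-1)`, the `ℓ_q`-norm of the diagonal second partial
derivatives of `M_p(x) = (∑ x_j^p)^(1/p)`, namely
`∂²M_p/∂x_k² = (p-1)x_k^(p-2)/M_p^(p-1) − (p-1)x_k^(2p-2)/M_p^(2p-1)`,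
is at most `2(p-1)d^(1/p)/M_p(x) + 2(p-1)/M_p(x)`. -/
theorem lp_second_diagonal_partials_norm (d : ℕ) (p : ℝ) (hp : 2 ≤ p)
    (x : Fin d → ℝ) (hx : ∀ i, 0 ≤ x i) (hx0 : x ≠ 0) :
    (∑ k : Fin d,
        |(p - 1) * (x k) ^ (p - 2) / ((∑ j, (x j) ^ p) ^ (1 / p)) ^ (p - 1)
            - (p - 1) * (x k) ^ (2 * p - 2) / ((∑ j, (x j) ^ p) ^ (1 / p)) ^ (2 * p - 1)|
          ^ (p / (p - 1))) ^ ((p - 1) / p)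
      ≤ 2 * (p - 1) * (d : ℝ) ^ (1 / p) / (∑ j, (x j) ^ p) ^ (1 / p)
          + 2 * (p - 1) / (∑ j, (x j) ^ p) ^ (1 / p) := by
  set M := (∑ j, x j ^ p) ^ (1 / p)
  have hp1 : 0 < p - 1 := by linarith
  have hxM : ∀ k, x k ≤ M := fun k =>
    le_sum_rpow_rpow_inv univ (by linarith) (fun i _ => hx i) (mem_univ k)
  obtain ⟨i, hi⟩ := Function.ne_iff.mp hx0
  have hM : 0 < M := ((hx i).lt_of_ne (Ne.symm hi)).trans_le (hxM i)
  have hc : 0 ≤ (p - 1) / M ^ (p - 1) := div_nonneg hp1.le (rpow_nonneg hM.le _)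
  have hD : 0 ≤ (d : ℝ) ^ (1 / p) := rpow_nonneg d.cast_nonneg _
  rw [← one_div_div p (p - 1)]
  calc _ ≤ (p - 1) / M ^ (p - 1)
          * (∑ k, (x k ^ (p - 2)) ^ (p / (p - 1))) ^ (1 / (p / (p - 1))) :=
        sum_abs_rpow_rpow_inv_le_mul univ (div_pos (by linarith) hp1) hc
          (fun k _ => rpow_nonneg (hx k) _)
          (fun k _ => abs_lp_second_partial_le (by linarith) (hx k) (hxM k))
    _ ≤ (p - 1) / M ^ (p - 1) * ((d : ℝ) ^ (1 / p) * M ^ (p - 2)) := by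
        gcongr
        simpa only [card_univ, Fintype.card_fin] using
          sum_rpow_sub_two_rpow_conj_le univ hp fun k _ => hx k
    _ = (p - 1) * (d : ℝ) ^ (1 / p) / M := by
        rw [show p - 1 = (p - 2) + 1 by ring, rpow_add_one hM.ne']
        field_simp
    _ ≤ 2 * (p - 1) * (d : ℝ) ^ (1 / p) / M + 2 * (p - 1) / M := by
        rw [← add_div, div_le_div_iff_of_pos_right hM]
        nlinarith
end

section
/- Let p, q > 1 be conjugate exponents. For any x in the nonnegative orthant of R^d minus the origin, (sum_{k,l,m} |∂³M_p(x)/∂x_k∂x_l∂x_m|^q)^{1/q} <= (2p-1)(p-1)/M_p(x)², where ∂³M_p/∂x_k∂x_l∂x_m = (2p-1)(p-1) x_k^{p-1} x_l^{p-1} x_m^{p-1} / M_p(x)^{3p-1} for distinct indices k, l, m. -/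
open Real Finset

/-- The `ℓ_q`-norm of the third mixed partial derivatives (distinct indices) of
`M_p(x) = (∑ x_j^p)^(1/p)`, namely
`∂³M_p/∂x_k∂x_l∂x_m = (2p-1)(p-1) x_k^(p-1) x_l^(p-1) x_m^(p-1) / M_p^(3p-1)`,
is at most `(2p-1)(p-1)/M_p(x)²`. -/
theorem lp_third_mixed_partials_norm (d : ℕ) (p q : ℝ) (hp : 1 < p) (hq : 1 < q)
    (hpq : 1 / p + 1 / q = 1) (x : Fin d → ℝ) (hx : ∀ i, 0 ≤ x i) (hx0 : x ≠ 0) :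
    (∑ k : Fin d, ∑ l : Fin d, ∑ m : Fin d,
        if k ≠ l ∧ l ≠ m ∧ k ≠ m then
          |(2 * p - 1) * (p - 1) * (x k) ^ (p - 1) * (x l) ^ (p - 1) * (x m) ^ (p - 1)
              / ((∑ j, (x j) ^ p) ^ (1 / p)) ^ (3 * p - 1)| ^ q
        else 0) ^ (1 / q)
      ≤ (2 * p - 1) * (p - 1) / ((∑ j, (x j) ^ p) ^ (1 / p)) ^ 2 := by
  have hp0 : (0:ℝ) < p := by linarith
  have hq0 : (0:ℝ) < q := by linarith
  set S := ∑ j, (x j) ^ p with hSdef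
  obtain ⟨i, hi⟩ : ∃ i, x i ≠ 0 := Function.ne_iff.mp hx0
  have hxi : 0 < x i := lt_of_le_of_ne (hx i) (Ne.symm hi)
  have hS : 0 < S :=
    Finset.sum_pos' (fun j _ => Real.rpow_nonneg (hx j) p)
      ⟨i, Finset.mem_univ i, Real.rpow_pos_of_pos hxi p⟩
  set M := S ^ (1/p) with hMdef
  have hM : 0 < M := Real.rpow_pos_of_pos hS _
  have hSM : S = M ^ p := by
    rw [hMdef, ← Real.rpow_mul hS.le, one_div, inv_mul_cancel₀ hp0.ne', Real.rpow_one]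
  have hpq2 : p + q = p * q := by
    field_simp at hpq; linarith
  have hC : (0:ℝ) < (2*p-1)*(p-1) := by nlinarith
  set C := (2*p-1)*(p-1) with hCdef
  -- full term value
  have hterm : ∀ k l m : Fin d,
      |C * (x k) ^ (p-1) * (x l) ^ (p-1) * (x m) ^ (p-1) / M ^ (3*p-1)| ^ q
        = C ^ q / (M ^ (3*p-1)) ^ q * ((x k) ^ p * ((x l) ^ p * (x m) ^ p)) := by
    intro k l m
    have hnum : 0 ≤ C * (x k) ^ (p-1) * (x l) ^ (p-1) * (x m) ^ (p-1) :=
      mul_nonneg (mul_nonneg (mul_nonneg hC.le (Real.rpow_nonneg (hx k) _))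
        (Real.rpow_nonneg (hx l) _)) (Real.rpow_nonneg (hx m) _)
    rw [abs_of_nonneg (div_nonneg hnum (Real.rpow_nonneg hM.le _)),
      Real.div_rpow hnum (Real.rpow_nonneg hM.le _),
      Real.mul_rpow (mul_nonneg (mul_nonneg hC.le (Real.rpow_nonneg (hx k) _))
        (Real.rpow_nonneg (hx l) _)) (Real.rpow_nonneg (hx m) _),
      Real.mul_rpow (mul_nonneg hC.le (Real.rpow_nonneg (hx k) _)) (Real.rpow_nonneg (hx l) _),
      Real.mul_rpow hC.le (Real.rpow_nonneg (hx k) _),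
      ← Real.rpow_mul (hx k), ← Real.rpow_mul (hx l), ← Real.rpow_mul (hx m)]
    have h1 : (p-1)*q = p := by nlinarith
    rw [h1]; ring
  -- bound the restricted sum by the full sum
  have hbound : (∑ k : Fin d, ∑ l : Fin d, ∑ m : Fin d,
      if k ≠ l ∧ l ≠ m ∧ k ≠ m then
        |C * (x k) ^ (p-1) * (x l) ^ (p-1) * (x m) ^ (p-1) / M ^ (3*p-1)| ^ q
      else 0)
      ≤ C ^ q / (M ^ (3*p-1)) ^ q * (S * (S * S)) := by
    have : (∑ k : Fin d, ∑ l : Fin d, ∑ m : Fin d,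
        if k ≠ l ∧ l ≠ m ∧ k ≠ m then
          |C * (x k) ^ (p-1) * (x l) ^ (p-1) * (x m) ^ (p-1) / M ^ (3*p-1)| ^ q
        else 0)
        ≤ ∑ k : Fin d, ∑ l : Fin d, ∑ m : Fin d,
          C ^ q / (M ^ (3*p-1)) ^ q * ((x k) ^ p * ((x l) ^ p * (x m) ^ p)) := by
      refine Finset.sum_le_sum fun k _ => Finset.sum_le_sum fun l _ =>
        Finset.sum_le_sum fun m _ => ?_
      rw [← hterm k l m]
      split_ifs
      · exact le_refl _
      · positivity
    refine this.trans_eq ?_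
    simp only [← Finset.mul_sum, ← Finset.sum_mul, ← hSdef]
  -- nonnegativity of the restricted sum
  have hnn : 0 ≤ (∑ k : Fin d, ∑ l : Fin d, ∑ m : Fin d,
      if k ≠ l ∧ l ≠ m ∧ k ≠ m then
        |C * (x k) ^ (p-1) * (x l) ^ (p-1) * (x m) ^ (p-1) / M ^ (3*p-1)| ^ q
      else 0) :=
    Finset.sum_nonneg fun k _ => Finset.sum_nonneg fun l _ => Finset.sum_nonneg fun m _ => by
      split_ifs
      · positivity
      · exact le_refl 0
  have hmain := Real.rpow_le_rpow hnn hbound (by positivity : (0:ℝ) ≤ 1/q)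
  refine hmain.trans_eq ?_
  -- compute the RHS
  have hE : C ^ q / (M ^ (3*p-1)) ^ q * (S * (S * S)) = (C / M ^ 2) ^ q := by
    rw [hSM, ← Real.rpow_mul hM.le, ← Real.rpow_natCast M 2,
      Real.div_rpow hC.le (Real.rpow_nonneg hM.le _),
      ← Real.rpow_mul hM.le, ← Real.rpow_add hM, ← Real.rpow_add hM]
    rw [div_mul_eq_mul_div, div_eq_div_iff (by positivity) (by positivity)]
    rw [mul_assoc, ← Real.rpow_add hM]
    congr 1
    congr 1
    push_cast
    linear_combination 3 * hpq2
  rw [hE, ← Real.rpow_natCast M 2, one_div, Real.rpow_rpow_inv (by positivity) hq0.ne']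
end
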